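/- Define μ(z) := sign(z)·σ'(σ⁻¹(|z|))·σ⁻¹(|z|) for z ∈ (−σ(R₀), σ(R₀)), with μ(0)=0. Then for z ≠ 0, μ is differentiable with μ'(z) = 1 + σ''(ρ)ρ/σ'(ρ) evaluated at ρ = σ⁻¹(|z|), and under (A3) one has θ ≤ μ'(z) and hence μ(z)/z ≥ θ > 0 for all z ≠ 0 in the interval. -/

import Mathlib

/-- With `μ(z) = sign(z)·σ'(σ⁻¹|z|)·σ⁻¹|z|` on `(−σ(R₀), σ(R₀))` (and `μ(0)=0`),
for `z ≠ 0` the function `μ` is differentiable with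
`μ'(z) = 1 + σ''(ρ)ρ/σ'(ρ)` at `ρ = σ⁻¹(|z|)`; under (A3), `θ ≤ μ'(z)` and `μ(z)/z ≥ θ > 0`. -/
theorem stmt_2 (R₀ θ : ℝ) (hR₀ : 0 < R₀) (hθ : θ ∈ Set.Ioc (0:ℝ) 1)
    (σ σ' σ'' σinv : ℝ → ℝ)
    (hσcont : ContinuousOn σ (Set.Icc 0 R₀)) (hσ0 : σ 0 = 0)
    (hσ' : ∀ ρ ∈ Set.Ioc (0:ℝ) R₀, HasDerivAt σ (σ' ρ) ρ)
    (hσ'' : ∀ ρ ∈ Set.Ioc (0:ℝ) R₀, HasDerivAt σ' (σ'' ρ) ρ)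
    (hσ''cont : ContinuousOn σ'' (Set.Ioc (0:ℝ) R₀))
    (hpos : ∀ ρ ∈ Set.Ioc (0:ℝ) R₀, 0 < σ' ρ)
    (hA3 : ∀ ρ ∈ Set.Ioc (0:ℝ) R₀, σ'' ρ * ρ / σ' ρ ≥ θ - 1)
    (hinv1 : ∀ ρ ∈ Set.Icc (0:ℝ) R₀, σinv (σ ρ) = ρ)
    (hinv2 : ∀ s ∈ Set.Icc (0:ℝ) (σ R₀), σ (σinv s) = s)
    (hinvmem : ∀ s ∈ Set.Ioc (0:ℝ) (σ R₀), σinv s ∈ Set.Ioc (0:ℝ) R₀)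
    (μ : ℝ → ℝ)
    (hμ : ∀ z, μ z = Real.sign z * σ' (σinv |z|) * σinv |z|) :
    ∀ z ∈ Set.Ioo (-(σ R₀)) (σ R₀), z ≠ 0 →
      HasDerivAt μ (1 + σ'' (σinv |z|) * σinv |z| / σ' (σinv |z|)) z ∧
      θ ≤ 1 + σ'' (σinv |z|) * σinv |z| / σ' (σinv |z|) ∧
      θ ≤ μ z / z ∧ 0 < θ := by
  -- σ is strictly monotone on Icc 0 R₀
  have hmono : StrictMonoOn σ (Set.Icc 0 R₀) := by
    apply StrictMonoOn.mono (s := Set.Icc 0 R₀) ?_ le_rfl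
    apply strictMonoOn_of_deriv_pos (convex_Icc 0 R₀) hσcont
    intro x hx
    rw [interior_Icc] at hx
    have hx' : x ∈ Set.Ioc (0:ℝ) R₀ := ⟨hx.1, hx.2.le⟩
    rw [(hσ' x hx').deriv]
    exact hpos x hx'
  -- key facts for s ∈ Ioo 0 (σ R₀)
  have key : ∀ s ∈ Set.Ioo (0:ℝ) (σ R₀),
      HasDerivAt (fun x => σ' (σinv x) * σinv x)
        (1 + σ'' (σinv s) * σinv s / σ' (σinv s)) s ∧ θ * s ≤ σ' (σinv s) * σinv s := by
    intro s hs
    set ρ := σinv s with hρdef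
    have hsIoc : s ∈ Set.Ioc (0:ℝ) (σ R₀) := ⟨hs.1, hs.2.le⟩
    have hρmem : ρ ∈ Set.Ioc (0:ℝ) R₀ := hinvmem s hsIoc
    have hσρ : σ ρ = s := hinv2 s ⟨hs.1.le, hs.2.le⟩
    have hρlt : ρ < R₀ := by
      rcases lt_or_eq_of_le hρmem.2 with h | h
      · exact h
      · exfalso; rw [h] at hσρ; exact absurd hσρ.symm (ne_of_lt hs.2)
    have hσ'pos := hpos ρ hρmem
    -- σinv is strictly monotone on Ioo 0 (σ R₀)
    have hsm : StrictMonoOn σinv (Set.Ioo 0 (σ R₀)) := by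
      intro a ha b hb hab
      have hma := hinvmem a ⟨ha.1, ha.2.le⟩
      have hmb := hinvmem b ⟨hb.1, hb.2.le⟩
      by_contra h
      push_neg at h
      have : σ (σinv b) ≤ σ (σinv a) :=
        hmono.monotoneOn ⟨hmb.1.le, hmb.2⟩ ⟨hma.1.le, hma.2⟩ h
      rw [hinv2 a ⟨ha.1.le, ha.2.le⟩, hinv2 b ⟨hb.1.le, hb.2.le⟩] at this
      exact absurd hab (not_lt.mpr this)
    -- continuity of σinv at s
    have hcont : ContinuousAt σinv s := by
      apply hsm.continuousAt_of_image_mem_nhds (isOpen_Ioo.mem_nhds hs)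
      apply Filter.mem_of_superset (isOpen_Ioo.mem_nhds (⟨hρmem.1, hρlt⟩ : ρ ∈ Set.Ioo 0 R₀))
      intro r hr
      refine ⟨σ r, ?_, hinv1 r ⟨hr.1.le, hr.2.le⟩⟩
      constructor
      · have := hmono ⟨le_refl 0, hR₀.le⟩ ⟨hr.1.le, hr.2.le⟩ hr.1
        rwa [hσ0] at this
      · exact hmono ⟨hr.1.le, hr.2.le⟩ ⟨hR₀.le, le_refl R₀⟩ hr.2
    -- derivative of σinv at s
    have hderivinv : HasDerivAt σinv (σ' ρ)⁻¹ s := by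
      apply HasDerivAt.of_local_left_inverse hcont (hσ' ρ hρmem) (ne_of_gt hσ'pos)
      filter_upwards [isOpen_Ioo.mem_nhds hs] with x hx
      exact hinv2 x ⟨hx.1.le, hx.2.le⟩
    -- derivative of x ↦ σ'(σinv x) * σinv x at s
    have hd : HasDerivAt (fun x => σ' (σinv x) * σinv x)
        ((σ'' ρ * ρ + σ' ρ * 1) * (σ' ρ)⁻¹) s := by
      have h1 : HasDerivAt (fun r => σ' r * r) (σ'' ρ * ρ + σ' ρ * 1) ρ :=
        (hσ'' ρ hρmem).mul (hasDerivAt_id ρ)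
      exact HasDerivAt.comp s h1 hderivinv
    have hdeq : (σ'' ρ * ρ + σ' ρ * 1) * (σ' ρ)⁻¹ = 1 + σ'' ρ * ρ / σ' ρ := by
      field_simp
      ring
    -- the inequality θ * s ≤ σ' ρ * ρ
    have hineq : θ * s ≤ σ' ρ * ρ := by
      set F := fun r => σ' r * r - θ * σ r with hFdef
      have hF : ∀ r ∈ Set.Ioc (0:ℝ) R₀, HasDerivAt F (σ'' r * r + σ' r * 1 - θ * σ' r) r := by
        intro r hr
        exact ((hσ'' r hr).mul (hasDerivAt_id r)).sub ((hσ' r hr).const_mul θ)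
      have hF' : ∀ r ∈ Set.Ioc (0:ℝ) R₀, 0 ≤ σ'' r * r + σ' r * 1 - θ * σ' r := by
        intro r hr
        have h1 := hA3 r hr
        have h2 := hpos r hr
        have h3 : (θ - 1) * σ' r ≤ σ'' r * r := (le_div_iff₀ h2).mp h1
        nlinarith
      have hclaim : ∀ a ∈ Set.Ioc (0:ℝ) ρ, F a ≤ F ρ := by
        intro a ha
        have hsub : Set.Icc a ρ ⊆ Set.Ioc (0:ℝ) R₀ := fun x hx =>
          ⟨lt_of_lt_of_le ha.1 hx.1, le_trans hx.2 hρmem.2⟩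
        have hmonoF : MonotoneOn F (Set.Icc a ρ) := by
          apply monotoneOn_of_deriv_nonneg (convex_Icc a ρ)
          · exact fun x hx => (hF x (hsub hx)).continuousAt.continuousWithinAt
          · intro x hx
            rw [interior_Icc] at hx
            exact ((hF x (hsub ⟨hx.1.le, hx.2.le⟩)).differentiableAt).differentiableWithinAt
          · intro x hx
            rw [interior_Icc] at hx
            rw [(hF x (hsub ⟨hx.1.le, hx.2.le⟩)).deriv]
            exact hF' x (hsub ⟨hx.1.le, hx.2.le⟩)
        exact hmonoF ⟨le_refl a, ha.2⟩ ⟨ha.2, le_refl ρ⟩ ha.2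
      have hev : ∀ᶠ a in nhdsWithin 0 (Set.Ioi 0), -(θ * σ a) ≤ F ρ := by
        have hIoc : Set.Ioc (0:ℝ) ρ ∈ nhdsWithin 0 (Set.Ioi 0) := by
          rw [← Set.Ioi_inter_Iic]
          exact Filter.inter_mem self_mem_nhdsWithin
            (mem_nhdsWithin_of_mem_nhds (Iic_mem_nhds hρmem.1))
        filter_upwards [hIoc] with a ha
        have hFa := hclaim a ha
        have haIoc : a ∈ Set.Ioc (0:ℝ) R₀ := ⟨ha.1, le_trans ha.2 hρmem.2⟩
        have : 0 < σ' a * a := mul_pos (hpos a haIoc) ha.1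
        simp only [hFdef] at hFa ⊢
        linarith
      have htend : Filter.Tendsto (fun a => -(θ * σ a)) (nhdsWithin 0 (Set.Ioi 0)) (nhds 0) := by
        have t0 : Filter.Tendsto σ (nhdsWithin 0 (Set.Icc 0 R₀)) (nhds 0) := by
          have := hσcont 0 ⟨le_refl 0, hR₀.le⟩
          rwa [ContinuousWithinAt, hσ0] at this
        have hle : nhdsWithin (0:ℝ) (Set.Ioi 0) ≤ nhdsWithin 0 (Set.Icc 0 R₀) := by
          apply nhdsWithin_le_of_mem
          apply Filter.mem_of_superset (Filter.inter_mem self_mem_nhdsWithin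
            (mem_nhdsWithin_of_mem_nhds (Iic_mem_nhds hR₀)))
          rw [Set.Ioi_inter_Iic]
          exact Set.Ioc_subset_Icc_self
        have := (t0.mono_left hle).const_mul θ |>.neg
        simpa using this
      have h0 : (0:ℝ) ≤ F ρ := le_of_tendsto htend hev
      simp only [hFdef] at h0
      rw [hσρ] at h0
      linarith
    exact ⟨hdeq ▸ hd, hineq⟩
  -- main argument
  intro z hz hz0
  refine ⟨?_, ?_, ?_, hθ.1⟩
  · -- derivative
    rcases lt_or_gt_of_ne hz0 with hneg | hposz
    · -- z < 0
      have hsmem : -z ∈ Set.Ioo (0:ℝ) (σ R₀) := ⟨neg_pos.mpr hneg, by linarith [hz.1]⟩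
      obtain ⟨hd, -⟩ := key (-z) hsmem
      have habs : |z| = -z := abs_of_neg hneg
      rw [habs]
      have hcomp : HasDerivAt (fun x => -(σ' (σinv (-x)) * σinv (-x)))
          (1 + σ'' (σinv (-z)) * σinv (-z) / σ' (σinv (-z))) z := by
        have h1 : HasDerivAt (fun x : ℝ => -x) (-1) z := (hasDerivAt_id z).neg
        have h2 := HasDerivAt.comp z hd h1
        have h3 := h2.neg
        convert h3 using 1
        · rfl
        · rfl
        · rfl
        · ring
      apply hcomp.congr_of_eventuallyEq
      filter_upwards [isOpen_Ioo.mem_nhds (⟨hz.1, hneg⟩ : z ∈ Set.Ioo (-(σ R₀)) 0)] with x hx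
      rw [hμ x, Real.sign_of_neg hx.2, abs_of_neg hx.2]
      ring
    · -- z > 0
      have hsmem : z ∈ Set.Ioo (0:ℝ) (σ R₀) := ⟨hposz, hz.2⟩
      obtain ⟨hd, -⟩ := key z hsmem
      have habs : |z| = z := abs_of_pos hposz
      rw [habs]
      apply hd.congr_of_eventuallyEq
      filter_upwards [isOpen_Ioo.mem_nhds hsmem] with x hx
      rw [hμ x, Real.sign_of_pos hx.1, abs_of_pos hx.1]
      ring
  · -- θ ≤ derivative
    have habs : |z| ∈ Set.Ioc (0:ℝ) (σ R₀) := by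
      constructor
      · exact abs_pos.mpr hz0
      · rcases lt_or_gt_of_ne hz0 with h | h
        · rw [abs_of_neg h]; linarith [hz.1]
        · rw [abs_of_pos h]; exact hz.2.le
    have hρmem := hinvmem |z| habs
    have h1 := hA3 (σinv |z|) hρmem
    linarith
  · -- θ ≤ μ z / z
    rcases lt_or_gt_of_ne hz0 with hneg | hposz
    · have hsmem : -z ∈ Set.Ioo (0:ℝ) (σ R₀) := ⟨neg_pos.mpr hneg, by linarith [hz.1]⟩
      obtain ⟨-, hineq⟩ := key (-z) hsmem
      rw [hμ z, Real.sign_of_neg hneg, abs_of_neg hneg]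
      rw [le_div_iff_of_neg hneg]
      nlinarith
    · have hsmem : z ∈ Set.Ioo (0:ℝ) (σ R₀) := ⟨hposz, hz.2⟩
      obtain ⟨-, hineq⟩ := key z hsmem
      rw [hμ z, Real.sign_of_pos hposz, abs_of_pos hposz]
      rw [le_div_iff₀ hposz]
      nlinarith
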